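/- Let p > 0 and q be continuous on [a,b], and let ψ₁, ψ₂ solve -(p u')' + q u = 0 on [a,b] with p·(ψ₁ ψ₂' - ψ₂ ψ₁') ≡ -1. Define G(x,y) = ψ₁(y)ψ₂(x) for y ≤ x and G(x,y) = ψ₂(y)ψ₁(x) for y > x. Then for continuous h, the function f(x) = ∫ₐᵇ G(x,y)h(y) dy satisfies -(p f')' + q f = h on (a,b). -/
import Mathlib


open Set

/-- Classical Green's function construction: with ψ₁, ψ₂ homogeneous solutions
    normalized so that p·W[ψ₁,ψ₂] ≡ -1, the kernel G(x,y) = ψ₁(y)ψ₂(x) for y ≤ x,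
    G(x,y) = ψ₂(y)ψ₁(x) for y > x, gives a solution f(x) = ∫ₐᵇ G(x,y)h(y)dy of
    -(p f')' + q f = h on (a,b). -/
theorem greens_function_solves (a b : ℝ) (hab : a < b) (p q h ψ₁ ψ₂ : ℝ → ℝ)
    (hpc : ContinuousOn p (Icc a b)) (hqc : ContinuousOn q (Icc a b))
    (hppos : ∀ x ∈ Icc a b, 0 < p x) (hhc : ContinuousOn h (Icc a b))
    (hψ₁d : ∀ x ∈ Icc a b, DifferentiableAt ℝ ψ₁ x)
    (hψ₂d : ∀ x ∈ Icc a b, DifferentiableAt ℝ ψ₂ x)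
    (hψ₁d2 : ∀ x ∈ Icc a b, DifferentiableAt ℝ (fun y => p y * deriv ψ₁ y) x)
    (hψ₂d2 : ∀ x ∈ Icc a b, DifferentiableAt ℝ (fun y => p y * deriv ψ₂ y) x)
    (hψ₁eq : ∀ x ∈ Icc a b, -(deriv (fun y => p y * deriv ψ₁ y) x) + q x * ψ₁ x = 0)
    (hψ₂eq : ∀ x ∈ Icc a b, -(deriv (fun y => p y * deriv ψ₂ y) x) + q x * ψ₂ x = 0)
    (hnorm : ∀ x ∈ Icc a b,
      p x * (ψ₁ x * deriv ψ₂ x - ψ₂ x * deriv ψ₁ x) = -1)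
    (G : ℝ → ℝ → ℝ)
    (hG : ∀ x y, G x y = if y ≤ x then ψ₁ y * ψ₂ x else ψ₂ y * ψ₁ x)
    (f : ℝ → ℝ) (hf : ∀ x, f x = ∫ y in a..b, G x y * h y) :
    ∀ x ∈ Ioo a b,
      -(deriv (fun t => p t * deriv f t) x) + q x * f x = h x := by
  intro x hx
  have hxI : x ∈ Icc a b := Ioo_subset_Icc_self hx
  have cψ₁ : ContinuousOn ψ₁ (Icc a b) := fun t ht =>
    (hψ₁d t ht).continuousAt.continuousWithinAt
  have cψ₂ : ContinuousOn ψ₂ (Icc a b) := fun t ht =>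
    (hψ₂d t ht).continuousAt.continuousWithinAt
  set k₁ : ℝ → ℝ := fun y => ψ₁ y * h y with hk₁
  set k₂ : ℝ → ℝ := fun y => ψ₂ y * h y with hk₂
  have ck₁ : ContinuousOn k₁ (Icc a b) := cψ₁.mul hhc
  have ck₂ : ContinuousOn k₂ (Icc a b) := cψ₂.mul hhc
  set F₁ : ℝ → ℝ := fun t => ∫ y in a..t, k₁ y with hF₁def
  set F₂ : ℝ → ℝ := fun t => ∫ y in t..b, k₂ y with hF₂def
  have hint₁ : ∀ t ∈ Icc a b, IntervalIntegrable k₁ MeasureTheory.volume a t := fun t ht =>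
    (ck₁.mono (Icc_subset_Icc_right ht.2)).intervalIntegrable_of_Icc ht.1
  have hint₂ : ∀ t ∈ Icc a b, IntervalIntegrable k₂ MeasureTheory.volume t b := fun t ht =>
    (ck₂.mono (Icc_subset_Icc_left ht.1)).intervalIntegrable_of_Icc ht.2
  -- rewrite f
  have hfeq : ∀ t ∈ Icc a b, f t = ψ₂ t * F₁ t + ψ₁ t * F₂ t := by
    intro t ht
    have e₁ : ∀ y ∈ Icc a t, G t y * h y = k₁ y * ψ₂ t := by
      intro y hy
      rw [hG, if_pos hy.2, hk₁]; ring
    have e₂ : ∀ y ∈ Icc t b, G t y * h y = k₂ y * ψ₁ t := by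
      intro y hy
      rw [hG, hk₂]
      by_cases hyt : y ≤ t
      · have hyeq : y = t := le_antisymm hyt hy.1
        subst hyeq; rw [if_pos le_rfl]; ring
      · rw [if_neg hyt]; ring
    have c₁ : ContinuousOn (fun y => G t y * h y) (Icc a t) := by
      refine ContinuousOn.congr ?_ e₁
      exact ((ck₁.mono (Icc_subset_Icc_right ht.2)).mul continuousOn_const)
    have c₂ : ContinuousOn (fun y => G t y * h y) (Icc t b) := by
      refine ContinuousOn.congr ?_ e₂
      exact ((ck₂.mono (Icc_subset_Icc_left ht.1)).mul continuousOn_const)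
    have i₁ : IntervalIntegrable (fun y => G t y * h y) MeasureTheory.volume a t :=
      c₁.intervalIntegrable_of_Icc ht.1
    have i₂ : IntervalIntegrable (fun y => G t y * h y) MeasureTheory.volume t b :=
      c₂.intervalIntegrable_of_Icc ht.2
    calc f t = ∫ y in a..b, G t y * h y := hf t
      _ = (∫ y in a..t, G t y * h y) + ∫ y in t..b, G t y * h y :=
          (intervalIntegral.integral_add_adjacent_intervals i₁ i₂).symm
      _ = (∫ y in a..t, k₁ y * ψ₂ t) + ∫ y in t..b, k₂ y * ψ₁ t := by
          congr 1
          · exact intervalIntegral.integral_congr (by rw [uIcc_of_le ht.1]; exact e₁)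
          · exact intervalIntegral.integral_congr (by rw [uIcc_of_le ht.2]; exact e₂)
      _ = ψ₂ t * F₁ t + ψ₁ t * F₂ t := by
          rw [intervalIntegral.integral_mul_const, intervalIntegral.integral_mul_const]
          ring
  have hnhds : ∀ t ∈ Ioo a b, Icc a b ∈ nhds t := fun t ht => Icc_mem_nhds ht.1 ht.2
  have cAt : ∀ t ∈ Ioo a b, ContinuousAt k₁ t ∧ ContinuousAt k₂ t := fun t ht =>
    ⟨ck₁.continuousAt (hnhds t ht), ck₂.continuousAt (hnhds t ht)⟩
  have meas₁ : ∀ t ∈ Ioo a b, StronglyMeasurableAtFilter k₁ (nhds t)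
      MeasureTheory.volume := by
    intro t ht
    exact ⟨Icc a b, hnhds t ht, ck₁.aestronglyMeasurable measurableSet_Icc⟩
  have meas₂ : ∀ t ∈ Ioo a b, StronglyMeasurableAtFilter k₂ (nhds t)
      MeasureTheory.volume := by
    intro t ht
    exact ⟨Icc a b, hnhds t ht, ck₂.aestronglyMeasurable measurableSet_Icc⟩
  have dF₁ : ∀ t ∈ Ioo a b, HasDerivAt F₁ (k₁ t) t := fun t ht =>
    intervalIntegral.integral_hasDerivAt_right (hint₁ t (Ioo_subset_Icc_self ht))
      (meas₁ t ht) (cAt t ht).1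
  have dF₂ : ∀ t ∈ Ioo a b, HasDerivAt F₂ (-(k₂ t)) t := fun t ht =>
    intervalIntegral.integral_hasDerivAt_left (hint₂ t (Ioo_subset_Icc_self ht))
      (meas₂ t ht) (cAt t ht).2
  -- derivative of f on Ioo
  have dfE : ∀ t ∈ Ioo a b, HasDerivAt f (deriv ψ₂ t * F₁ t + deriv ψ₁ t * F₂ t) t := by
    intro t ht
    have htI := Ioo_subset_Icc_self ht
    have H : HasDerivAt (fun s => ψ₂ s * F₁ s + ψ₁ s * F₂ s)
        (deriv ψ₂ t * F₁ t + ψ₂ t * k₁ t + (deriv ψ₁ t * F₂ t + ψ₁ t * (-(k₂ t)))) t :=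
      ((hψ₂d t htI).hasDerivAt.mul (dF₁ t ht)).add
        ((hψ₁d t htI).hasDerivAt.mul (dF₂ t ht))
    have H' : HasDerivAt f
        (deriv ψ₂ t * F₁ t + ψ₂ t * k₁ t + (deriv ψ₁ t * F₂ t + ψ₁ t * (-(k₂ t)))) t :=
      H.congr_of_eventuallyEq (Filter.eventually_of_mem (hnhds t ht) hfeq)
    have : deriv ψ₂ t * F₁ t + ψ₂ t * k₁ t + (deriv ψ₁ t * F₂ t + ψ₁ t * (-(k₂ t)))
        = deriv ψ₂ t * F₁ t + deriv ψ₁ t * F₂ t := by rw [hk₁, hk₂]; ring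
    rwa [this] at H'
  -- the function p * f' agrees with φ near x
  set φ : ℝ → ℝ := fun t => (p t * deriv ψ₂ t) * F₁ t + (p t * deriv ψ₁ t) * F₂ t with hφ
  have hev : (fun t => p t * deriv f t) =ᶠ[nhds x] φ := by
    refine Filter.eventually_of_mem (isOpen_Ioo.mem_nhds hx) ?_
    intro t ht
    rw [hφ]; simp only
    rw [(dfE t ht).deriv]; ring
  have hderiv_eq : deriv (fun t => p t * deriv f t) x = deriv φ x := hev.deriv_eq
  -- derivative of φ at x
  have Dφ : HasDerivAt φ
      (deriv (fun y => p y * deriv ψ₂ y) x * F₁ x + (p x * deriv ψ₂ x) * k₁ x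
        + (deriv (fun y => p y * deriv ψ₁ y) x * F₂ x + (p x * deriv ψ₁ x) * (-(k₂ x)))) x :=
    ((hψ₂d2 x hxI).hasDerivAt.mul (dF₁ x hx)).add
      ((hψ₁d2 x hxI).hasDerivAt.mul (dF₂ x hx))
  have D2ψ₁ : deriv (fun y => p y * deriv ψ₁ y) x = q x * ψ₁ x := by
    have := hψ₁eq x hxI; linarith
  have D2ψ₂ : deriv (fun y => p y * deriv ψ₂ y) x = q x * ψ₂ x := by
    have := hψ₂eq x hxI; linarith
  have W := hnorm x hxI
  rw [hderiv_eq, Dφ.deriv, hfeq x hxI, D2ψ₁, D2ψ₂, hk₁, hk₂]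
  simp only
  linear_combination (-(h x)) * W
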